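/- For a weighted graph G with nonnegative symmetric weights, the Laplacian centrality of vertex v decomposes as E_L(G) − E_L(G_v) = d_v² + ∑_{u ≠ v} (2 w(u,v) d_u − w(u,v)²) + 2 ∑_{u ≠ v} w(u,v)² where d_u denotes the weighted degree of u in G. -/

import Mathlib

/-!
Deleting `v` zeroes row and column `v` of the weight matrix. The degree of `v` drops to `0`,
contributing `d_v²`; for `u ≠ v` the degree drops by `w(u,v)`, and
`d_u² - (d_u - w(u,v))² = 2 w(u,v) d_u - w(u,v)²`. The lost edges are exactly the pairs
containing `v`, which by symmetry contribute `∑_{u ≠ v} w(u,v)²`.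
-/

open Finset

section OrderedSums

variable {ι M : Type*} [Fintype ι] [LinearOrder ι] [AddCommMonoid M]

theorem sum_filter_lt_ite_eq_or_eq (f : ι → ι → M) (v : ι) :
    ∑ a, ∑ b ∈ univ.filter (a < ·), (if a = v ∨ b = v then f a b else 0) =
      ∑ u ∈ univ.filter (· < v), f u v + ∑ u ∈ univ.filter (v < ·), f v u := by
  -- on a pair `a < b` at most one of `a = v`, `b = v` holds
  have hsplit : ∀ a, ∀ b ∈ univ.filter (a < ·), (if a = v ∨ b = v then f a b else 0) =
      (if b = v then f a b else 0) + if a = v then f a b else 0 := by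
    intro a b hab
    have hne : a ≠ b := (mem_filter.1 hab).2.ne
    by_cases ha : a = v <;> by_cases hb : b = v <;> simp_all
  simp only [sum_congr rfl (hsplit _), sum_add_distrib, sum_ite_irrel, sum_const_zero,
    sum_ite_eq', mem_filter, mem_univ, true_and, if_true, ← sum_filter]

theorem sum_filter_ne_eq_sum_filter_lt_add_sum_filter_gt (g : ι → M) (v : ι) :
    ∑ u ∈ univ.filter (· ≠ v), g u =
      ∑ u ∈ univ.filter (· < v), g u + ∑ u ∈ univ.filter (v < ·), g u := by
  rw [← sum_filter_add_sum_filter_not _ (· < v), filter_filter, filter_filter]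
  congr 2 <;> ext u <;> simp only [mem_filter, mem_univ, true_and]
  · exact and_iff_right_of_imp ne_of_lt
  · rw [not_lt, ne_comm, lt_iff_le_and_ne, and_comm]

end OrderedSums

section VertexDeletion

variable {ι R : Type*} [Fintype ι] (w : ι → ι → R) (v : ι)

def deleteVertex [DecidableEq ι] [Zero R] (a b : ι) : R :=
  if a = v ∨ b = v then 0 else w a b

theorem sum_deleteVertex_self [DecidableEq ι] [AddCommMonoid R] : ∑ b, deleteVertex w v v b = 0 := by
  simp [deleteVertex]

theorem sum_deleteVertex_of_ne [DecidableEq ι] [AddCommGroup R] {a : ι} (ha : a ≠ v) :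
    ∑ b, deleteVertex w v a b = ∑ b, w a b - w a v := by
  have hsplit : ∀ b, deleteVertex w v a b = w a b - if b = v then w a b else 0 := by
    intro b
    by_cases hb : b = v <;> simp [deleteVertex, ha, hb]
  simp only [hsplit, sum_sub_distrib, sum_ite_eq', mem_univ, if_true]

theorem sum_sq_sum_sub_sum_sq_sum_deleteVertex [DecidableEq ι] [CommRing R] :
    ∑ a, (∑ b, w a b) ^ 2 - ∑ a, (∑ b, deleteVertex w v a b) ^ 2 =
      (∑ b, w v b) ^ 2 +
        ∑ u ∈ univ.filter (· ≠ v), (2 * w u v * ∑ b, w u b - w u v ^ 2) := by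
  rw [← sum_sub_distrib, filter_ne', ← add_sum_erase _ _ (mem_univ v),
    sum_deleteVertex_self]
  congr 1
  · ring
  refine sum_congr rfl fun u hu => ?_
  rw [sum_deleteVertex_of_ne w v (ne_of_mem_erase hu)]
  ring

theorem sum_filter_lt_sq_sub_sum_filter_lt_sq_deleteVertex [LinearOrder ι] [CommRing R]
    (hsymm : ∀ a b, w a b = w b a) :
    ∑ a, ∑ b ∈ univ.filter (a < ·), w a b ^ 2 -
        ∑ a, ∑ b ∈ univ.filter (a < ·), deleteVertex w v a b ^ 2 =
      ∑ u ∈ univ.filter (· ≠ v), w u v ^ 2 := by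
  have hdiff : ∀ a b, w a b ^ 2 - deleteVertex w v a b ^ 2 =
      if a = v ∨ b = v then w a b ^ 2 else 0 := by
    intro a b
    by_cases h : a = v ∨ b = v <;> simp [deleteVertex, h]
  simp only [← sum_sub_distrib, hdiff]
  rw [sum_filter_lt_ite_eq_or_eq, sum_filter_ne_eq_sum_filter_lt_add_sum_filter_gt]
  simp only [hsymm v]

end VertexDeletion

theorem stmt_13_general (n : ℕ) (w : Fin n → Fin n → ℝ)
    (hsymm : ∀ u v, w u v = w v u)
    (d : Fin n → ℝ) (hd : ∀ u, d u = ∑ v, w u v)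
    (v : Fin n)
    (wv : Fin n → Fin n → ℝ)
    (hwv : ∀ a b, wv a b = if a = v ∨ b = v then 0 else w a b)
    (E : (Fin n → Fin n → ℝ) → ℝ)
    (hE : ∀ W : Fin n → Fin n → ℝ, E W =
      ∑ a, (∑ b, W a b) ^ 2 + 2 * ∑ a, ∑ b ∈ Finset.univ.filter (a < ·), (W a b) ^ 2) :
    E w - E wv =
      (d v) ^ 2 + ∑ u ∈ Finset.univ.filter (· ≠ v), (2 * w u v * d u - (w u v) ^ 2)
        + 2 * ∑ u ∈ Finset.univ.filter (· ≠ v), (w u v) ^ 2 := by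
  obtain rfl : wv = deleteVertex w v := funext fun a => funext (hwv a)
  obtain rfl : d = fun u => ∑ b, w u b := funext hd
  rw [hE, hE]
  linear_combination sum_sq_sum_sub_sum_sq_sum_deleteVertex w v +
    2 * sum_filter_lt_sq_sub_sum_filter_lt_sq_deleteVertex w v hsymm

theorem stmt_13 (n : ℕ) (w : Fin n → Fin n → ℝ)
    (hsymm : ∀ u v, w u v = w v u) (hnonneg : ∀ u v, 0 ≤ w u v)
    (hdiag : ∀ u, w u u = 0)
    (d : Fin n → ℝ) (hd : ∀ u, d u = ∑ v, w u v)
    (v : Fin n)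
    (wv : Fin n → Fin n → ℝ)
    (hwv : ∀ a b, wv a b = if a = v ∨ b = v then 0 else w a b)
    (E : (Fin n → Fin n → ℝ) → ℝ)
    (hE : ∀ W : Fin n → Fin n → ℝ, E W =
      ∑ a, (∑ b, W a b) ^ 2 + 2 * ∑ a, ∑ b ∈ Finset.univ.filter (a < ·), (W a b) ^ 2) :
    E w - E wv =
      (d v) ^ 2 + ∑ u ∈ Finset.univ.filter (· ≠ v), (2 * w u v * d u - (w u v) ^ 2)
        + 2 * ∑ u ∈ Finset.univ.filter (· ≠ v), (w u v) ^ 2 :=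
  stmt_13_general n w hsymm d hd v wv hwv E hE
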